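/- arXiv:1902.08364 — 2 statements merged into one kernel-verified Lean document; each statement's English description precedes it below -/
import Mathlib

section
/- Let X and Y be independent real random variables. Assume X is regularly varying with index α>0 with tail balance constants p and q (p+q=1), and that E|Y|^{α+ε}<∞ for some ε>0. Then lim_{x→∞} P(XY>x)/P(|X|>x) = p·E[Y₊^α] + q·E[Y₋^α], where Y₊=max(Y,0), Y₋=max(−Y,0). -/
/-!
Condition on `Y = b`: by independence, `P(XY > x) = ∫ P(bX > x) dP_Y(b)`. For fixed `b`, regular
variation and tail balance give `P(bX > x) / P(|X| > x) → p b₊^α + q b₋^α`. To pass to the limit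
under the integral, Potter's bound `P(|X| > x/m) ≤ C m^(α+ε) P(|X| > x)` for `m ≥ 1` and large `x`
(obtained by iterating `P(|X| > u) ≤ 2^(α+ε) P(|X| > 2u)`) dominates the integrand by
`C (1 + |b|^(α+ε))`, which is integrable by the moment assumption.
-/

open MeasureTheory ProbabilityTheory Filter Set Topology

lemma Antitone.pos_of_tendsto_div {t f : ℝ → ℝ} (ht : Antitone t) (ht0 : ∀ u, 0 ≤ t u) {L : ℝ}
    (hL : L ≠ 0) (h : Tendsto (fun x => f x / t x) atTop (𝓝 L)) (u : ℝ) : 0 < t u := by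
  refine (ht0 u).lt_of_ne fun htu => hL ?_
  have hzero : ∀ᶠ x in atTop, f x / t x = 0 := by
    filter_upwards [eventually_ge_atTop u] with x hx
    rw [le_antisymm (htu ▸ ht hx) (ht0 x), div_zero]
  exact tendsto_nhds_unique (h.congr' hzero) tendsto_const_nhds

lemma Filter.Tendsto.comp_mul_div {f t : ℝ → ℝ} {c ℓ L : ℝ} (hc : 0 < c) (ht : ∀ x, t x ≠ 0)
    (hf : Tendsto (fun x => f x / t x) atTop (𝓝 ℓ))
    (hct : Tendsto (fun x => t (c * x) / t x) atTop (𝓝 L)) :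
    Tendsto (fun x => f (c * x) / t x) atTop (𝓝 (ℓ * L)) :=
  ((hf.comp (tendsto_id.const_mul_atTop hc)).mul hct).congr fun _ => div_mul_div_cancel₀ (ht _)

lemma tendsto_of_le_of_forall_lt_le {ι : Type*} {l : Filter ι} {F : ι → ℝ} {G : ℝ → ι → ℝ}
    {L : ℝ → ℝ} {c₀ : ℝ} (hL : ContinuousWithinAt L (Ioi c₀) c₀)
    (hG : ∀ c, c₀ ≤ c → Tendsto (G c) l (𝓝 (L c)))
    (hupper : ∀ᶠ i in l, F i ≤ G c₀ i) (hlower : ∀ c, c₀ < c → ∀ᶠ i in l, G c i ≤ F i) :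
    Tendsto F l (𝓝 (L c₀)) := by
  refine tendsto_order.2 ⟨fun a ha => ?_, fun a ha => ?_⟩
  · obtain ⟨c, hac, hc⟩ := ((hL.eventually (lt_mem_nhds ha)).and self_mem_nhdsWithin).exists
    filter_upwards [(hG c (le_of_lt hc)).eventually (lt_mem_nhds hac), hlower c hc] with i hi hi'
    exact hi.trans_le hi'
  · filter_upwards [(hG c₀ le_rfl).eventually (gt_mem_nhds ha), hupper] with i hi hi'
    exact hi'.trans_lt hi

lemma Real.max_one_rpow_le {y β : ℝ} (hy : 0 ≤ y) : max y 1 ^ β ≤ 1 + y ^ β := by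
  have := Real.rpow_nonneg hy β
  rcases le_total y 1 with h | h
  · rw [max_eq_right h, Real.one_rpow]; linarith
  · rw [max_eq_left h]; linarith

lemma Real.rpow_le_one_add_rpow {y α γ : ℝ} (hy : 0 ≤ y) (hα : 0 ≤ α) (hαγ : α ≤ γ) :
    y ^ α ≤ 1 + y ^ γ :=
  calc y ^ α ≤ max y 1 ^ α := Real.rpow_le_rpow hy (le_max_left _ _) hα
    _ ≤ max y 1 ^ γ := Real.rpow_le_rpow_of_exponent_le (le_max_right _ _) hαγ
    _ ≤ 1 + y ^ γ := Real.max_one_rpow_le hy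

section Potter

variable {t : ℝ → ℝ} {x₀ β : ℝ}

lemma le_rpow_mul_of_doubling (ht : Antitone t) (ht0 : ∀ u, 0 ≤ t u) (hβ : 0 ≤ β)
    (hx₀ : 0 ≤ x₀) (hdouble : ∀ u, x₀ ≤ u → t u ≤ 2 ^ β * t (2 * u))
    {u s : ℝ} (hu : x₀ ≤ u) (hs : 1 ≤ s) :
    t u ≤ (2 * s) ^ β * t (s * u) := by
  have hiter : ∀ n : ℕ, t u ≤ ((2 : ℝ) ^ n) ^ β * t (2 ^ n * u) := by
    intro n
    induction n with
    | zero => simp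
    | succ n ih =>
      have hle : x₀ ≤ 2 ^ n * u :=
        hu.trans (le_mul_of_one_le_left (hx₀.trans hu) (one_le_pow₀ one_le_two))
      calc t u ≤ ((2 : ℝ) ^ n) ^ β * t (2 ^ n * u) := ih
        _ ≤ ((2 : ℝ) ^ n) ^ β * (2 ^ β * t (2 * (2 ^ n * u))) := by gcongr; exact hdouble _ hle
        _ = ((2 : ℝ) ^ (n + 1)) ^ β * t (2 ^ (n + 1) * u) := by
          rw [pow_succ, Real.mul_rpow (by positivity) zero_le_two]; ring_nf
  obtain ⟨n, hns, hsn⟩ := exists_nat_pow_near hs one_lt_two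
  have h2n : (2 : ℝ) ^ (n + 1) ≤ 2 * s := by rw [pow_succ']; linarith
  calc t u ≤ ((2 : ℝ) ^ (n + 1)) ^ β * t (2 ^ (n + 1) * u) := hiter (n + 1)
    _ ≤ (2 * s) ^ β * t (s * u) := by
      gcongr
      · exact ht0 _
      · exact ht (mul_le_mul_of_nonneg_right hsn.le (hx₀.trans hu))

lemma exists_potter_bound (ht : Antitone t) (htpos : ∀ u, 0 < t u) {α : ℝ} (hαβ : α < β)
    (hβ : 0 ≤ β) (h2 : Tendsto (fun x => t (2 * x) / t x) atTop (𝓝 (2 ^ (-α)))) :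
    ∃ C, 0 ≤ C ∧ ∀ᶠ x in atTop, ∀ m, 1 ≤ m → t (x / m) ≤ C * m ^ β * t x := by
  have hdouble : ∀ᶠ u in atTop, t u ≤ 2 ^ β * t (2 * u) := by
    have hlt : (2 : ℝ) ^ (-β) < 2 ^ (-α) :=
      Real.rpow_lt_rpow_of_exponent_lt one_lt_two (by linarith)
    filter_upwards [h2.eventually (lt_mem_nhds hlt)] with u hu
    rw [lt_div_iff₀ (htpos u), Real.rpow_neg zero_le_two, inv_mul_lt_iff₀ (by positivity)] at hu
    exact hu.le
  obtain ⟨x₁, hx₁⟩ := eventually_atTop.mp hdouble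
  set x₀ := max x₁ 1
  have hx₀ : 0 < x₀ := lt_max_of_lt_right one_pos
  have hdouble' : ∀ u, x₀ ≤ u → t u ≤ 2 ^ β * t (2 * u) :=
    fun u hu => hx₁ u ((le_max_left _ _).trans hu)
  refine ⟨2 ^ β * max 1 (t 0 / t x₀), by positivity, ?_⟩
  filter_upwards [eventually_ge_atTop x₀] with x hx m hm
  have hm0 : 0 < m := one_pos.trans_le hm
  have hC : (2 * m) ^ β = 2 ^ β * m ^ β := Real.mul_rpow zero_le_two hm0.le
  rcases le_or_gt x₀ (x / m) with hxm | hxm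
  · calc t (x / m) ≤ (2 * m) ^ β * t (m * (x / m)) :=
          le_rpow_mul_of_doubling ht (fun u => (htpos u).le) hβ hx₀.le hdouble' hxm hm
      _ = 2 ^ β * 1 * m ^ β * t x := by rw [mul_div_cancel₀ _ hm0.ne', hC]; ring
      _ ≤ 2 ^ β * max 1 (t 0 / t x₀) * m ^ β * t x := by
          gcongr; exacts [(htpos x).le, le_max_left _ _]
  · -- below the threshold, bound `t (x / m)` by `t 0` and compare `t x₀` with `t x` instead
    have hs : 1 ≤ x / x₀ := (one_le_div hx₀).mpr hx
    have hsm : x / x₀ ≤ m := by rw [div_le_iff₀ hx₀]; rw [div_lt_iff₀ hm0] at hxm; linarith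
    have hx₀x : t x₀ ≤ (2 * m) ^ β * t x :=
      calc t x₀ ≤ (2 * (x / x₀)) ^ β * t (x / x₀ * x₀) :=
            le_rpow_mul_of_doubling ht (fun u => (htpos u).le) hβ hx₀.le hdouble' le_rfl hs
        _ ≤ (2 * m) ^ β * t x := by
            rw [div_mul_cancel₀ _ hx₀.ne']; gcongr; exact (htpos x).le
    calc t (x / m) ≤ t 0 := ht (div_nonneg (hx₀.le.trans hx) hm0.le)
      _ = t 0 / t x₀ * t x₀ := by rw [div_mul_cancel₀ _ (htpos x₀).ne']
      _ ≤ t 0 / t x₀ * ((2 * m) ^ β * t x) := by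
          gcongr; exact div_nonneg (htpos 0).le (htpos x₀).le
      _ = 2 ^ β * (t 0 / t x₀) * m ^ β * t x := by rw [hC]; ring
      _ ≤ 2 ^ β * max 1 (t 0 / t x₀) * m ^ β * t x := by
          gcongr; exacts [(htpos x).le, le_max_right _ _]

end Potter

lemma integrable_rpow_of_le_abs {Ω : Type*} [MeasurableSpace Ω] {μ : Measure Ω} [IsFiniteMeasure μ]
    {f g : Ω → ℝ} {α γ : ℝ} (hg : Measurable g) (hg0 : ∀ ω, 0 ≤ g ω) (hgf : ∀ ω, g ω ≤ |f ω|)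
    (hα : 0 ≤ α) (hαγ : α ≤ γ) (hf : Integrable (fun ω => |f ω| ^ γ) μ) :
    Integrable (fun ω => g ω ^ α) μ := by
  refine ((integrable_const 1).add hf).mono (hg.pow_const α).aestronglyMeasurable
    (Eventually.of_forall fun ω => ?_)
  show ‖g ω ^ α‖ ≤ ‖1 + |f ω| ^ γ‖
  rw [Real.norm_of_nonneg (Real.rpow_nonneg (hg0 ω) α), Real.norm_of_nonneg (by positivity)]
  exact (Real.rpow_le_rpow (hg0 ω) (hgf ω) hα).trans
    (Real.rpow_le_one_add_rpow (abs_nonneg _) hα hαγ)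

lemma ProbabilityTheory.IndepFun.measure_preimage_eq_lintegral {Ω β γ : Type*} [MeasurableSpace Ω]
    [MeasurableSpace β] [MeasurableSpace γ] {μ : Measure Ω} [IsFiniteMeasure μ] {X : Ω → β}
    {Y : Ω → γ} (hX : Measurable X) (hY : Measurable Y) (h : IndepFun X Y μ)
    {s : Set (γ × β)} (hs : MeasurableSet s) :
    μ ((fun ω => (Y ω, X ω)) ⁻¹' s) = ∫⁻ b, μ.map X (Prod.mk b ⁻¹' s) ∂μ.map Y := by
  rw [← Measure.map_apply (hY.prodMk hX) hs,
    (indepFun_iff_map_prod_eq_prod_map_map hY.aemeasurable hX.aemeasurable).mp h.symm,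
    Measure.prod_apply hs]

noncomputable def absTail (ν : Measure ℝ) (x : ℝ) : ℝ := (ν {a | x < |a|}).toReal

lemma absTail_nonneg (ν : Measure ℝ) (x : ℝ) : 0 ≤ absTail ν x := ENNReal.toReal_nonneg

section absTail

variable {ν : Measure ℝ} [IsFiniteMeasure ν]

lemma absTail_antitone : Antitone (absTail ν) := fun _ _ hxy =>
  ENNReal.toReal_mono (measure_ne_top ν _) (measure_mono fun _ ha => hxy.trans_lt ha)

lemma measure_lt_mul_le_absTail (x b : ℝ) :
    (ν {a | x < a * b}).toReal ≤ absTail ν (x / max |b| 1) := by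
  refine ENNReal.toReal_mono (measure_ne_top ν _) (measure_mono fun a (ha : x < a * b) => ?_)
  show x / max |b| 1 < |a|
  rw [div_lt_iff₀ (lt_max_of_lt_right one_pos)]
  calc x < a * b := ha
    _ ≤ |a| * |b| := (le_abs_self _).trans (abs_mul a b).le
    _ ≤ |a| * max |b| 1 := by gcongr; exact le_max_left _ _

lemma measurable_measure_setOf_lt_mul (x : ℝ) : Measurable fun b => ν {a | x < a * b} :=
  measurable_measure_prodMk_left (measurableSet_lt measurable_const
    (measurable_snd.mul measurable_fst))

lemma tendsto_measure_lt_mul_div_absTail {α p q : ℝ} (hα : α ≠ 0) (htpos : ∀ x, 0 < absTail ν x)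
    (hRV : ∀ c, 0 < c → Tendsto (fun x => absTail ν (c * x) / absTail ν x) atTop (𝓝 (c ^ (-α))))
    (hbalp : Tendsto (fun x => (ν (Ioi x)).toReal / absTail ν x) atTop (𝓝 p))
    (hbalq : Tendsto (fun x => (ν (Iic (-x))).toReal / absTail ν x) atTop (𝓝 q)) (b : ℝ) :
    Tendsto (fun x => (ν {a | x < a * b}).toReal / absTail ν x) atTop
      (𝓝 (p * max b 0 ^ α + q * max (-b) 0 ^ α)) := by
  have htne : ∀ x, absTail ν x ≠ 0 := fun x => (htpos x).ne'
  rcases lt_trichotomy b 0 with hb | rfl | hb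
  · set c₀ := (-b)⁻¹
    have hc₀ : 0 < c₀ := inv_pos.mpr (neg_pos.mpr hb)
    have hset : ∀ x, {a | x < a * b} = Iio (-(c₀ * x)) := fun x => by
      have hxb : -(c₀ * x) = x / b := by simp only [c₀]; field_simp
      ext a
      show x < a * b ↔ a < -(c₀ * x)
      rw [hxb, lt_div_iff_of_neg hb]
    have hval : p * max b 0 ^ α + q * max (-b) 0 ^ α = q * c₀ ^ (-α) := by
      rw [max_eq_right hb.le, max_eq_left (neg_pos.mpr hb).le, Real.zero_rpow hα,
        Real.inv_rpow (neg_pos.mpr hb).le, Real.rpow_neg (neg_pos.mpr hb).le, inv_inv]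
      ring
    have hG : ∀ c, c₀ ≤ c → Tendsto (fun x => (ν (Iic (-(c * x)))).toReal / absTail ν x) atTop
        (𝓝 (q * c ^ (-α))) := fun c hc =>
      Tendsto.comp_mul_div (f := fun y => (ν (Iic (-y))).toReal) (hc₀.trans_le hc) htne hbalq
        (hRV c (hc₀.trans_le hc))
    rw [hval]
    -- `hbalq` controls closed half-lines `Iic`, but the set is the open `Iio (-(c₀ * x))`:
    -- squeeze it between `Iic (-(c * x))`, `c ↓ c₀`, and `Iic (-(c₀ * x))`.
    refine tendsto_of_le_of_forall_lt_le (L := fun c => q * c ^ (-α))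
      (continuousAt_const.mul
        (Real.continuousAt_rpow_const _ _ (Or.inl hc₀.ne'))).continuousWithinAt
      hG (Eventually.of_forall fun x => ?_) (fun c hc => ?_)
    · rw [hset]
      exact div_le_div_of_nonneg_right (ENNReal.toReal_mono (measure_ne_top ν _)
        (measure_mono Iio_subset_Iic_self)) (absTail_nonneg ν x)
    · filter_upwards [eventually_gt_atTop 0] with x hx
      rw [hset]
      exact div_le_div_of_nonneg_right (ENNReal.toReal_mono (measure_ne_top ν _)
        (measure_mono (Iic_subset_Iio.mpr (neg_lt_neg (mul_lt_mul_of_pos_right hc hx)))))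
        (absTail_nonneg ν x)
  · have hzero : ∀ᶠ x in atTop, (ν {a | x < a * 0}).toReal / absTail ν x = 0 := by
      filter_upwards [eventually_ge_atTop 0] with x hx
      simp [not_lt.mpr hx]
    simpa [Real.zero_rpow hα] using tendsto_const_nhds.congr' (EventuallyEq.symm hzero)
  · have hset : ∀ x, {a | x < a * b} = Ioi (b⁻¹ * x) := fun x => by
      ext a
      show x < a * b ↔ b⁻¹ * x < a
      rw [← div_lt_iff₀ hb, div_eq_inv_mul]
    have hval : p * max b 0 ^ α + q * max (-b) 0 ^ α = p * b⁻¹ ^ (-α) := by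
      rw [max_eq_left hb.le, max_eq_right (neg_nonpos.mpr hb.le), Real.zero_rpow hα,
        Real.inv_rpow hb.le, Real.rpow_neg hb.le, inv_inv]
      ring
    simp only [hset, hval]
    exact Tendsto.comp_mul_div (f := fun y => (ν (Ioi y)).toReal) (inv_pos.mpr hb) htne hbalp
      (hRV _ (inv_pos.mpr hb))

end absTail

theorem tendsto_integral_measure_lt_mul_div_absTail {ν η : Measure ℝ} [IsFiniteMeasure ν]
    [IsFiniteMeasure η] {α ε p q : ℝ} (hα : 0 < α) (hε : 0 < ε)
    (hRV : ∀ c, 0 < c → Tendsto (fun x => absTail ν (c * x) / absTail ν x) atTop (𝓝 (c ^ (-α))))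
    (hbalp : Tendsto (fun x => (ν (Ioi x)).toReal / absTail ν x) atTop (𝓝 p))
    (hbalq : Tendsto (fun x => (ν (Iic (-x))).toReal / absTail ν x) atTop (𝓝 q))
    (hmom : Integrable (fun b => |b| ^ (α + ε)) η) :
    Tendsto (fun x => ∫ b, (ν {a | x < a * b}).toReal / absTail ν x ∂η) atTop
      (𝓝 (∫ b, (p * max b 0 ^ α + q * max (-b) 0 ^ α) ∂η)) := by
  have htpos : ∀ x, 0 < absTail ν x := absTail_antitone.pos_of_tendsto_div (absTail_nonneg ν)
    (Real.rpow_pos_of_pos two_pos _).ne' (hRV 2 two_pos)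
  obtain ⟨C, hC, hpotter⟩ := exists_potter_bound absTail_antitone htpos (β := α + ε)
    (by linarith) (by linarith) (hRV 2 two_pos)
  refine tendsto_integral_filter_of_dominated_convergence (fun b => C * (1 + |b| ^ (α + ε)))
    (Eventually.of_forall fun x => ?_) ?_ (((integrable_const 1).add hmom).const_mul C)
    (ae_of_all _ (tendsto_measure_lt_mul_div_absTail hα.ne' htpos hRV hbalp hbalq))
  · exact ((measurable_measure_setOf_lt_mul x).ennreal_toReal.div_const _).aestronglyMeasurable
  · filter_upwards [hpotter] with x hx
    refine ae_of_all _ fun b => ?_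
    rw [Real.norm_of_nonneg (div_nonneg ENNReal.toReal_nonneg (htpos x).le),
      div_le_iff₀ (htpos x)]
    calc (ν {a | x < a * b}).toReal ≤ absTail ν (x / max |b| 1) := measure_lt_mul_le_absTail x b
      _ ≤ C * max |b| 1 ^ (α + ε) * absTail ν x := hx _ (le_max_right _ _)
      _ ≤ C * (1 + |b| ^ (α + ε)) * absTail ν x := by
        gcongr
        · exact (htpos x).le
        · exact Real.max_one_rpow_le (abs_nonneg b)

theorem stmt0_general
    {Ω : Type*} [MeasurableSpace Ω] (μ : Measure Ω) [IsProbabilityMeasure μ]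
    (X Y : Ω → ℝ) (hXm : Measurable X) (hYm : Measurable Y)
    (hindep : IndepFun X Y μ)
    (α : ℝ) (hα : 0 < α) (p q : ℝ)
    (hRV : ∀ c : ℝ, 0 < c →
      Tendsto (fun x : ℝ => (μ {ω | c * x < |X ω|}).toReal / (μ {ω | x < |X ω|}).toReal)
        atTop (nhds (c ^ (-α))))
    (hbalp : Tendsto (fun x : ℝ => (μ {ω | x < X ω}).toReal / (μ {ω | x < |X ω|}).toReal)
        atTop (nhds p))
    (hbalq : Tendsto (fun x : ℝ => (μ {ω | X ω ≤ -x}).toReal / (μ {ω | x < |X ω|}).toReal)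
        atTop (nhds q))
    (hmom : ∃ ε : ℝ, 0 < ε ∧ Integrable (fun ω => |Y ω| ^ (α + ε)) μ) :
    Tendsto (fun x : ℝ => (μ {ω | x < X ω * Y ω}).toReal / (μ {ω | x < |X ω|}).toReal)
      atTop
      (nhds (p * ∫ ω, max (Y ω) 0 ^ α ∂μ + q * ∫ ω, max (-Y ω) 0 ^ α ∂μ)) := by
  obtain ⟨ε, hε, hmomY⟩ := hmom
  have htail : ∀ x, absTail (μ.map X) x = (μ {ω | x < |X ω|}).toReal := fun x => by
    rw [absTail, Measure.map_apply hXm (measurableSet_lt measurable_const measurable_abs)]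
    rfl
  have hIoi : ∀ x, (μ.map X (Ioi x)).toReal = (μ {ω | x < X ω}).toReal := fun x => by
    rw [Measure.map_apply hXm measurableSet_Ioi]; rfl
  have hIic : ∀ x, (μ.map X (Iic (-x))).toReal = (μ {ω | X ω ≤ -x}).toReal := fun x => by
    rw [Measure.map_apply hXm measurableSet_Iic]; rfl
  have hmom' : Integrable (fun b => |b| ^ (α + ε)) (μ.map Y) :=
    (integrable_map_measure (measurable_abs.pow_const _).aestronglyMeasurable
      hYm.aemeasurable).mpr hmomY
  have hlim := tendsto_integral_measure_lt_mul_div_absTail (ν := μ.map X) hα hε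
    (by simpa only [htail] using hRV) (by simpa only [htail, hIoi] using hbalp)
    (by simpa only [htail, hIic] using hbalq) hmom'
  have hpos : Integrable (fun ω => max (Y ω) 0 ^ α) μ := integrable_rpow_of_le_abs (by fun_prop)
    (fun _ => le_max_right _ _) (fun ω => max_le (le_abs_self _) (abs_nonneg _)) hα.le
    (by linarith) hmomY
  have hneg : Integrable (fun ω => max (-Y ω) 0 ^ α) μ := integrable_rpow_of_le_abs (by fun_prop)
    (fun _ => le_max_right _ _) (fun ω => max_le (neg_le_abs _) (abs_nonneg _)) hα.le
    (by linarith) hmomY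
  rw [integral_map hYm.aemeasurable (by fun_prop), integral_add (hpos.const_mul p)
    (hneg.const_mul q), integral_const_mul, integral_const_mul] at hlim
  refine hlim.congr fun x => ?_
  have hrep : μ {ω | x < X ω * Y ω} = ∫⁻ b, μ.map X {a | x < a * b} ∂μ.map Y :=
    hindep.measure_preimage_eq_lintegral hXm hYm (s := {z | x < z.2 * z.1})
      (measurableSet_lt measurable_const (measurable_snd.mul measurable_fst))
  rw [integral_div, htail, hrep, integral_toReal (measurable_measure_setOf_lt_mul x).aemeasurable
    (ae_of_all _ fun _ => measure_lt_top _ _)]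

/-- Breiman-type lemma: if `X` is regularly varying with index `α > 0` and tail balance
constants `p, q`, and `Y` is independent with a finite moment of order `α + ε`, then
`P(XY > x)/P(|X| > x) → p E[Y₊^α] + q E[Y₋^α]`. -/
theorem stmt0
    {Ω : Type*} [MeasurableSpace Ω] (μ : Measure Ω) [IsProbabilityMeasure μ]
    (X Y : Ω → ℝ) (hXm : Measurable X) (hYm : Measurable Y)
    (hindep : IndepFun X Y μ)
    (α : ℝ) (hα : 0 < α) (p q : ℝ) (hp : 0 ≤ p) (hq : 0 ≤ q) (hpq : p + q = 1)
    (hRV : ∀ c : ℝ, 0 < c →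
      Tendsto (fun x : ℝ => (μ {ω | c * x < |X ω|}).toReal / (μ {ω | x < |X ω|}).toReal)
        atTop (nhds (c ^ (-α))))
    (hbalp : Tendsto (fun x : ℝ => (μ {ω | x < X ω}).toReal / (μ {ω | x < |X ω|}).toReal)
        atTop (nhds p))
    (hbalq : Tendsto (fun x : ℝ => (μ {ω | X ω ≤ -x}).toReal / (μ {ω | x < |X ω|}).toReal)
        atTop (nhds q))
    (hmom : ∃ ε : ℝ, 0 < ε ∧ Integrable (fun ω => |Y ω| ^ (α + ε)) μ) :
    Tendsto (fun x : ℝ => (μ {ω | x < X ω * Y ω}).toReal / (μ {ω | x < |X ω|}).toReal)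
      atTop
      (nhds (p * ∫ ω, max (Y ω) 0 ^ α ∂μ + q * ∫ ω, max (-Y ω) 0 ^ α ∂μ)) :=
  stmt0_general μ X Y hXm hYm hindep α hα p q hRV hbalp hbalq hmom
end

section
/- Let (M_{11,t})_{t} and (M_{12,t})_t be i.i.d. sequences of real random variables with E[|M_{11}|^{α₂}]=:q<1 and E[|M_{12}|^{α₂}]<∞ for some α₂>0, independent of a stationary sequence (Y_{2,t}) satisfying sup_{x>0} x^{α₂} P(|Y_{2,t}|>x) ≤ c < ∞. Then there exist constants C>0 such that for every s∈ℕ and all x>0, x^{α₂} P(|Σ_{i=s+1}^∞ (∏_{j=2−i}^{0}M_{11,j}) M_{12,1−i} Y_{2,−i}| > x) ≤ C q^s, where all products ∏_{j=2−i}^{0}M_{11,j} consist of i−1 i.i.d. factors independent of M_{12,1−i}Y_{2,−i}. -/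
/-!
Write `Gᵢ = (∏_{j=2-i}^{0} M₁₁,ⱼ) M₁₂,₁₋ᵢ`. By independence, `E|Gᵢ|^{α₂} = q^{i-1} E|M₁₂|^{α₂}`,
and since `Gᵢ` is independent of `Y₂,₋ᵢ`, conditioning on `Gᵢ` in the tail bound of `Y₂`
gives `P(|Gᵢ Y₂,₋ᵢ| > y) ≤ c E|Gᵢ|^{α₂} y^{-α₂}`. For the remainder series, choose `r < 1`
with `q < r^{α₂}`: if the sum exceeds `x`, some summand of index `s + n` exceeds
`(1 - r) rⁿ x`, and the union bound leaves the geometric series `∑ₙ (q / r^{α₂})ⁿ` times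
`c E|M₁₂|^{α₂} (1 - r)^{-α₂} q^s x^{-α₂}`.
-/

open MeasureTheory ProbabilityTheory Finset

lemma exists_lt_rpow_of_lt_one {q α : ℝ} (hq0 : 0 ≤ q) (hq1 : q < 1) (hα : 0 < α) :
    ∃ r : ℝ, 0 < r ∧ r < 1 ∧ q < r ^ α := by
  refine ⟨((1 + q) / 2) ^ α⁻¹, by positivity,
    Real.rpow_lt_one (by positivity) (by linarith) (by positivity), ?_⟩
  rw [← Real.rpow_mul (by positivity), inv_mul_cancel₀ hα.ne', Real.rpow_one]
  linarith

lemma exists_lt_abs_of_lt_abs_tsum {r x : ℝ} (hr0 : 0 ≤ r) (hr1 : r < 1) {z : ℕ → ℝ}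
    (h : x < |∑' n, z n|) : ∃ n, (1 - r) * r ^ n * x < |z n| := by
  by_contra! hle
  have hw : HasSum (fun n => (1 - r) * r ^ n * x) x := by
    have := ((hasSum_geometric_of_lt_one hr0 hr1).mul_left (1 - r)).mul_right x
    rwa [mul_inv_cancel₀ (sub_pos.2 hr1).ne', one_mul] at this
  have hz : Summable fun n => |z n| := .of_nonneg_of_le (fun n => abs_nonneg _) hle hw.summable
  have : |∑' n, z n| ≤ x :=
    calc |∑' n, z n| ≤ ∑' n, |z n| := by
          simpa only [Real.norm_eq_abs] using norm_tsum_le_tsum_norm (f := z) (by simpa using hz)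
      _ ≤ x := hw.tsum_eq ▸ hz.tsum_le_tsum hle hw.summable
  linarith

section
variable {Ω β : Type*} [MeasurableSpace Ω] [MeasurableSpace β] {μ : Measure Ω}
  {W : ℕ → Ω → β} {φ ψ : β → ℝ}

lemma measure_lt_abs_const_mul_le [IsFiniteMeasure μ] {Y : Ω → ℝ} {α c x : ℝ} (hx : 0 < x)
    (hc : 0 ≤ c) (htail : ∀ y : ℝ, 0 < y → y ^ α * (μ {ω | y < |Y ω|}).toReal ≤ c)
    (g : ℝ) :
    μ {ω | x < |g * Y ω|} ≤ ENNReal.ofReal (c / x ^ α * |g| ^ α) := by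
  rcases eq_or_ne g 0 with rfl | hg
  · simp [hx.not_gt]
  have hg' : 0 < |g| := abs_pos.2 hg
  have hset : {ω | x < |g * Y ω|} = {ω | x / |g| < |Y ω|} := by
    ext ω
    change x < |g * Y ω| ↔ x / |g| < |Y ω|
    rw [div_lt_iff₀ hg', abs_mul, mul_comm]
  have hpos : 0 < (x / |g|) ^ α := by positivity
  rw [hset, ENNReal.le_ofReal_iff_toReal_le (measure_ne_top μ _) (by positivity)]
  calc (μ {ω | x / |g| < |Y ω|}).toReal ≤ c / (x / |g|) ^ α := by
        rw [le_div_iff₀ hpos, mul_comm]; exact htail _ (div_pos hx hg')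
    _ = c / x ^ α * |g| ^ α := by
        rw [Real.div_rpow hx.le hg'.le]; field_simp

lemma ProbabilityTheory.IndepFun.measure_lt_abs_mul_le [IsProbabilityMeasure μ] {G Y : Ω → ℝ}
    (hGm : Measurable G) (hYm : Measurable Y) (hGY : IndepFun G Y μ) {α c x : ℝ} (hx : 0 < x)
    (hc : 0 ≤ c) (htail : ∀ y : ℝ, 0 < y → y ^ α * (μ {ω | y < |Y ω|}).toReal ≤ c)
    (hGint : Integrable (fun ω => |G ω| ^ α) μ) :
    μ {ω | x < |G ω * Y ω|} ≤ ENNReal.ofReal (c * (∫ ω, |G ω| ^ α ∂μ) / x ^ α) := by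
  have hS : MeasurableSet {p : ℝ × ℝ | x < |p.1 * p.2|} := by measurability
  have hsection : ∀ g : ℝ, μ.map Y (Prod.mk g ⁻¹' {p : ℝ × ℝ | x < |p.1 * p.2|})
      ≤ ENNReal.ofReal (c / x ^ α * |g| ^ α) := fun g => by
    rw [Measure.map_apply hYm (measurable_prodMk_left hS)]
    exact measure_lt_abs_const_mul_le hx hc htail g
  calc μ {ω | x < |G ω * Y ω|}
      = (μ.map G).prod (μ.map Y) {p : ℝ × ℝ | x < |p.1 * p.2|} := by
        rw [← (indepFun_iff_map_prod_eq_prod_map_map hGm.aemeasurable hYm.aemeasurable).1 hGY,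
          Measure.map_apply (hGm.prodMk hYm) hS]
        rfl
    _ ≤ ∫⁻ g, ENNReal.ofReal (c / x ^ α * |g| ^ α) ∂(μ.map G) := by
        rw [Measure.prod_apply hS]; exact lintegral_mono hsection
    _ = ENNReal.ofReal (c / x ^ α) * ENNReal.ofReal (∫ ω, |G ω| ^ α ∂μ) := by
        simp_rw [ENNReal.ofReal_mul (by positivity : 0 ≤ c / x ^ α)]
        rw [lintegral_const_mul' _ _ ENNReal.ofReal_ne_top, lintegral_map (by fun_prop) hGm,
          ofReal_integral_eq_lintegral_ofReal hGint (ae_of_all _ fun ω => by positivity)]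
    _ = ENNReal.ofReal (c * (∫ ω, |G ω| ^ α ∂μ) / x ^ α) := by
        rw [← ENNReal.ofReal_mul (by positivity)]; ring_nf

lemma rpow_mul_measure_lt_abs_tsum_le {Z : ℕ → Ω → ℝ} {α B q r x : ℝ} (hB : 0 ≤ B)
    (hq : 0 ≤ q) (hr0 : 0 < r) (hr1 : r < 1) (hqr : q < r ^ α) (hx : 0 < x)
    (hZ : ∀ n y, 0 < y → μ {ω | y < |Z n ω|} ≤ ENNReal.ofReal (B * q ^ n / y ^ α)) :
    x ^ α * (μ {ω | x < |∑' n, Z n ω|}).toReal ≤ B / ((1 - r) ^ α * (1 - q / r ^ α)) := by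
  have h1r : 0 < 1 - r := sub_pos.2 hr1
  have hrα : 0 < r ^ α := by positivity
  have hρ : q / r ^ α < 1 := (div_lt_one hrα).2 hqr
  have hρ0 : 0 ≤ q / r ^ α := by positivity
  have hterm : ∀ n, μ {ω | (1 - r) * r ^ n * x < |Z n ω|}
      ≤ ENNReal.ofReal (B / ((1 - r) ^ α * x ^ α) * (q / r ^ α) ^ n) := fun n => by
    refine (hZ n _ (by positivity)).trans_eq (congrArg _ ?_)
    rw [Real.mul_rpow (by positivity) hx.le, Real.mul_rpow h1r.le (by positivity),
      ← Real.rpow_pow_comm hr0.le, div_pow]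
    field_simp
  have hμ : μ {ω | x < |∑' n, Z n ω|}
      ≤ ENNReal.ofReal (B / ((1 - r) ^ α * (1 - q / r ^ α)) / x ^ α) := calc
    μ {ω | x < |∑' n, Z n ω|} ≤ μ (⋃ n, {ω | (1 - r) * r ^ n * x < |Z n ω|}) :=
        measure_mono fun ω hω => Set.mem_iUnion.2 (exists_lt_abs_of_lt_abs_tsum hr0.le hr1 hω)
    _ ≤ ∑' n, ENNReal.ofReal (B / ((1 - r) ^ α * x ^ α) * (q / r ^ α) ^ n) :=
        (measure_iUnion_le _).trans (ENNReal.tsum_le_tsum hterm)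
    _ = ENNReal.ofReal (B / ((1 - r) ^ α * (1 - q / r ^ α)) / x ^ α) := by
        rw [← ENNReal.ofReal_tsum_of_nonneg (fun n => by positivity)
            ((summable_geometric_of_lt_one hρ0 hρ).mul_left _),
          tsum_mul_left, tsum_geometric_of_lt_one hρ0 hρ]
        congr 1
        field_simp
  have hD : 0 < (1 - r) ^ α * (1 - q / r ^ α) := mul_pos (by positivity) (sub_pos.2 hρ)
  have hxα : 0 < x ^ α := by positivity
  have := ENNReal.toReal_le_of_le_ofReal (by positivity) hμ
  rwa [le_div_iff₀ hxα, mul_comm] at this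

lemma ProbabilityTheory.iIndepFun.indepFun_prod_range_comp (hW : iIndepFun W μ)
    (hWm : ∀ k, Measurable (W k)) (hφ : Measurable φ) (hψ : Measurable ψ) (N : ℕ) :
    IndepFun (fun ω => ∏ k ∈ range N, φ (W k ω)) (fun ω => ψ (W N ω)) μ := by
  have h := (hW.indepFun_finset (range N) {N} (by simp) hWm).comp
    (φ := fun u : range N → β => ∏ k, φ (u k))
    (ψ := fun u : ({N} : Finset ℕ) → β => ψ (u ⟨N, mem_singleton_self N⟩))
    (by fun_prop) (by fun_prop)
  convert h using 2 with ω
  · exact (prod_coe_sort (range N) fun k => φ (W k ω)).symm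
  · rfl

lemma integrable_prod_range_comp_and_integral (hW : iIndepFun W μ) (hWm : ∀ k, Measurable (W k))
    (hident : ∀ k, IdentDistrib (W k) (W 0) μ μ) (hφ : Measurable φ)
    (hφi : Integrable (fun ω => φ (W 0 ω)) μ) (N : ℕ) :
    Integrable (fun ω => ∏ k ∈ range N, φ (W k ω)) μ ∧
      ∫ ω, ∏ k ∈ range N, φ (W k ω) ∂μ = (∫ ω, φ (W 0 ω) ∂μ) ^ N := by
  have := hW.isProbabilityMeasure
  induction N with
  | zero => simp
  | succ N ih =>
    have hid := (hident N).comp hφ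
    have hint : Integrable (fun ω => φ (W N ω)) μ := hid.integrable_iff.2 hφi
    have hind := hW.indepFun_prod_range_comp hWm hφ hφ N
    simp only [prod_range_succ]
    refine ⟨hind.integrable_mul ih.1 hint, ?_⟩
    rw [hind.integral_fun_mul_eq_mul_integral ih.1.aestronglyMeasurable hint.aestronglyMeasurable,
      ih.2, pow_succ]
    exact congrArg _ hid.integral_eq

lemma integrable_prod_range_comp_mul_and_integral (hW : iIndepFun W μ)
    (hWm : ∀ k, Measurable (W k)) (hident : ∀ k, IdentDistrib (W k) (W 0) μ μ)
    (hφ : Measurable φ) (hψ : Measurable ψ) (hφi : Integrable (fun ω => φ (W 0 ω)) μ)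
    (hψi : Integrable (fun ω => ψ (W 0 ω)) μ) (N : ℕ) :
    Integrable (fun ω => (∏ k ∈ range N, φ (W k ω)) * ψ (W N ω)) μ ∧
      ∫ ω, (∏ k ∈ range N, φ (W k ω)) * ψ (W N ω) ∂μ
        = (∫ ω, φ (W 0 ω) ∂μ) ^ N * ∫ ω, ψ (W 0 ω) ∂μ := by
  obtain ⟨hprod, hprod_eq⟩ := integrable_prod_range_comp_and_integral hW hWm hident hφ hφi N
  have hid := (hident N).comp hψ
  have hint : Integrable (fun ω => ψ (W N ω)) μ := hid.integrable_iff.2 hψi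
  have hind := hW.indepFun_prod_range_comp hWm hφ hψ N
  refine ⟨hind.integrable_mul hprod hint, ?_⟩
  rw [hind.integral_fun_mul_eq_mul_integral hprod.aestronglyMeasurable hint.aestronglyMeasurable,
    hprod_eq]
  exact congrArg _ hid.integral_eq

lemma measure_lt_abs_summand_le [IsProbabilityMeasure μ] {M11 M12 Y2 : ℤ → Ω → ℝ}
    (hM11m : ∀ t, Measurable (M11 t)) (hM12m : ∀ t, Measurable (M12 t))
    (hY2m : ∀ t, Measurable (Y2 t))
    (hiid : iIndepFun (fun t ω => (M11 t ω, M12 t ω)) μ)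
    (hdist : ∀ t : ℤ, Measure.map (fun ω => (M11 t ω, M12 t ω)) μ
      = Measure.map (fun ω => (M11 0 ω, M12 0 ω)) μ)
    (hindepY : IndepFun (fun ω => fun t : ℤ => (M11 t ω, M12 t ω))
      (fun ω => fun t : ℤ => Y2 t ω) μ)
    {α c : ℝ} (hc : 0 ≤ c)
    (htail : ∀ t : ℤ, ∀ x : ℝ, 0 < x → x ^ α * (μ {ω | x < |Y2 t ω|}).toReal ≤ c)
    (hint1 : Integrable (fun ω => |M11 0 ω| ^ α) μ)
    (hint2 : Integrable (fun ω => |M12 0 ω| ^ α) μ) (N : ℕ) {y : ℝ} (hy : 0 < y) :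
    μ {ω | y <
        |(∏ k ∈ range N, M11 (-(k : ℤ)) ω) * M12 (-(N : ℤ)) ω * Y2 (-(N : ℤ) - 1) ω|}
      ≤ ENNReal.ofReal
        (c * ((∫ ω, |M11 0 ω| ^ α ∂μ) ^ N * ∫ ω, |M12 0 ω| ^ α ∂μ) / y ^ α) := by
  set W : ℕ → Ω → ℝ × ℝ := fun k ω => (M11 (-(k : ℤ)) ω, M12 (-(k : ℤ)) ω)
  have hWm : ∀ k, Measurable (W k) := fun k => (hM11m _).prodMk (hM12m _)
  have hW : iIndepFun W μ := hiid.precomp fun a b h => by simpa using h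
  have hident : ∀ k, IdentDistrib (W k) (W 0) μ μ := fun k =>
    ⟨(hWm k).aemeasurable, (hWm 0).aemeasurable, by
      simp only [W]; rw [hdist, Int.natCast_zero, neg_zero]⟩
  obtain ⟨hint, hmoment⟩ := integrable_prod_range_comp_mul_and_integral hW hWm hident
    (φ := fun p => |p.1| ^ α) (ψ := fun p => |p.2| ^ α) (by fun_prop) (by fun_prop)
    (by simpa [W] using hint1) (by simpa [W] using hint2) N
  have habs : (fun ω => |(∏ k ∈ range N, M11 (-(k : ℤ)) ω) * M12 (-(N : ℤ)) ω| ^ α)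
      = fun ω => (∏ k ∈ range N, |(W k ω).1| ^ α) * |(W N ω).2| ^ α := by
    ext ω
    rw [abs_mul, Real.mul_rpow (abs_nonneg _) (abs_nonneg _), abs_prod,
      Real.finsetProd_rpow _ _ fun k _ => abs_nonneg _]
  have hGY : IndepFun (fun ω => (∏ k ∈ range N, M11 (-(k : ℤ)) ω) * M12 (-(N : ℤ)) ω)
      (Y2 (-(N : ℤ) - 1)) μ :=
    hindepY.comp
      (φ := fun u : ℤ → ℝ × ℝ => (∏ k ∈ range N, (u (-k)).1) * (u (-N)).2)
      (ψ := fun v : ℤ → ℝ => v (-(N : ℤ) - 1)) (by fun_prop) (measurable_pi_apply _)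
  have := hGY.measure_lt_abs_mul_le (by fun_prop) (hY2m _) hy hc (htail _) (habs ▸ hint)
  rwa [habs, hmoment] at this

end

theorem stmt14_general
    {Ω : Type*} [MeasurableSpace Ω] (μ : Measure Ω) [IsProbabilityMeasure μ]
    (M11 M12 Y2 : ℤ → Ω → ℝ)
    (hM11m : ∀ t, Measurable (M11 t)) (hM12m : ∀ t, Measurable (M12 t))
    (hY2m : ∀ t, Measurable (Y2 t))
    (hiid : iIndepFun (fun t ω => (M11 t ω, M12 t ω)) μ)
    (hdist : ∀ t : ℤ, Measure.map (fun ω => (M11 t ω, M12 t ω)) μ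
      = Measure.map (fun ω => (M11 0 ω, M12 0 ω)) μ)
    (hindepY : IndepFun (fun ω => fun t : ℤ => (M11 t ω, M12 t ω))
      (fun ω => fun t : ℤ => Y2 t ω) μ)
    (α₂ c : ℝ) (hα₂ : 0 < α₂) (hc : 0 < c)
    (htail : ∀ t : ℤ, ∀ x : ℝ, 0 < x → x ^ α₂ * (μ {ω | x < |Y2 t ω|}).toReal ≤ c)
    (hint1 : Integrable (fun ω => |M11 0 ω| ^ α₂) μ)
    (hint2 : Integrable (fun ω => |M12 0 ω| ^ α₂) μ)
    (q : ℝ) (hq : q = ∫ ω, |M11 0 ω| ^ α₂ ∂μ) (hq1 : q < 1) :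
    ∃ C : ℝ, 0 < C ∧ ∀ s : ℕ, ∀ x : ℝ, 0 < x →
      x ^ α₂ * (μ {ω | x < |∑' n : ℕ,
          (∏ k ∈ Finset.range (s + n), M11 (-(k : ℤ)) ω)
            * M12 (-(s + n : ℤ)) ω * Y2 (-(s + n : ℤ) - 1) ω|}).toReal
        ≤ C * q ^ s := by
  have hq0 : 0 ≤ q := hq ▸ integral_nonneg fun ω => by positivity
  obtain ⟨r, hr0, hr1, hqr⟩ := exists_lt_rpow_of_lt_one hq0 hq1 hα₂
  set m := ∫ ω, |M12 0 ω| ^ α₂ ∂μ with hm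
  set K := c * m / ((1 - r) ^ α₂ * (1 - q / r ^ α₂))
  have hK : 0 ≤ K := by
    have := sub_pos.2 ((div_lt_one (by positivity)).2 hqr)
    positivity
  refine ⟨K + 1, by positivity, fun s x hx => ?_⟩
  calc _ ≤ c * m * q ^ s / ((1 - r) ^ α₂ * (1 - q / r ^ α₂)) := by
        refine rpow_mul_measure_lt_abs_tsum_le (by positivity) hq0 hr0 hr1 hqr hx fun n y hy => ?_
        have := measure_lt_abs_summand_le hM11m hM12m hY2m hiid hdist hindepY hc.le htail hint1
          hint2 (s + n) hy
        push_cast at this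
        rw [← hq, ← hm, pow_add] at this
        exact this.trans_eq (by ring_nf)
    _ = K * q ^ s := by ring
    _ ≤ (K + 1) * q ^ s := by gcongr; linarith

/-- Geometric tail bound for the remainder series
`Ỹ^s = ∑_{i > s} (∏_{j=2-i}^{0} M₁₁,ⱼ) M₁₂,₁₋ᵢ Y₂,₋ᵢ`: if `((M₁₁,ₜ, M₁₂,ₜ))ₜ` is i.i.d.
with `q := E|M₁₁|^{α₂} < 1` and `E|M₁₂|^{α₂} < ∞`, independent of the stationary sequence
`(Y₂,ₜ)` with `sup_{x>0} x^{α₂} P(|Y₂,ₜ| > x) ≤ c < ∞`, then there is `C > 0` such that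
for every `s` and all `x > 0`, `x^{α₂} P(|Ỹ^s| > x) ≤ C q^s`. -/
theorem stmt14
    {Ω : Type*} [MeasurableSpace Ω] (μ : Measure Ω) [IsProbabilityMeasure μ]
    (M11 M12 Y2 : ℤ → Ω → ℝ)
    (hM11m : ∀ t, Measurable (M11 t)) (hM12m : ∀ t, Measurable (M12 t))
    (hY2m : ∀ t, Measurable (Y2 t))
    (hiid : iIndepFun (fun t ω => (M11 t ω, M12 t ω)) μ)
    (hdist : ∀ t : ℤ, Measure.map (fun ω => (M11 t ω, M12 t ω)) μ
      = Measure.map (fun ω => (M11 0 ω, M12 0 ω)) μ)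
    (hindepY : IndepFun (fun ω => fun t : ℤ => (M11 t ω, M12 t ω))
      (fun ω => fun t : ℤ => Y2 t ω) μ)
    (hstatY : Measure.map (fun ω => fun t : ℤ => Y2 (t + 1) ω) μ
      = Measure.map (fun ω => fun t : ℤ => Y2 t ω) μ)
    (α₂ c : ℝ) (hα₂ : 0 < α₂) (hc : 0 < c)
    (htail : ∀ t : ℤ, ∀ x : ℝ, 0 < x → x ^ α₂ * (μ {ω | x < |Y2 t ω|}).toReal ≤ c)
    (hint1 : Integrable (fun ω => |M11 0 ω| ^ α₂) μ)
    (hint2 : Integrable (fun ω => |M12 0 ω| ^ α₂) μ)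
    (q : ℝ) (hq : q = ∫ ω, |M11 0 ω| ^ α₂ ∂μ) (hq1 : q < 1) :
    ∃ C : ℝ, 0 < C ∧ ∀ s : ℕ, ∀ x : ℝ, 0 < x →
      x ^ α₂ * (μ {ω | x < |∑' n : ℕ,
          (∏ k ∈ Finset.range (s + n), M11 (-(k : ℤ)) ω)
            * M12 (-(s + n : ℤ)) ω * Y2 (-(s + n : ℤ) - 1) ω|}).toReal
        ≤ C * q ^ s :=
  stmt14_general μ M11 M12 Y2 hM11m hM12m hY2m hiid hdist hindepY α₂ c hα₂ hc htail hint1 hint2 q hq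
    hq1
end
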